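/- arXiv:math/0605660 — 4 statements merged into one kernel-verified Lean document; each statement's English description precedes it below -/
import Mathlib

section
/- Let d > 2 and let C₁, …, C_{d−2} be polynomials in ℂ[x₁, …, x_d]. Then the determinantal bracket {F,G}_det := det(∇F, ∇G, ∇C₁, …, ∇C_{d−2}) satisfies the Jacobi identity: for all polynomials F, G, H in ℂ[x₁, …, x_d], {F,{G,H}_det}_det + {G,{H,F}_det}_det + {H,{F,G}_det}_det = 0. -/
open MvPolynomial

/-- The determinantal (Nambu) bracket on `ℂ[x₁,…,x_d]` determined by the
polynomials `C₁,…,C_{d-2}`: `{F,G}_det = det(∇F, ∇G, ∇C₁, …, ∇C_{d-2})`. -/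
noncomputable def detBracket (d : ℕ) (hd : 2 < d) (C : Fin (d - 2) → MvPolynomial (Fin d) ℂ)
    (F G : MvPolynomial (Fin d) ℂ) : MvPolynomial (Fin d) ℂ :=
  Matrix.det (Matrix.of fun (i j : Fin d) =>
    if (j : ℕ) = 0 then pderiv i F
    else if (j : ℕ) = 1 then pderiv i G
    else pderiv i (C ⟨(j : ℕ) - 2, by have := j.isLt; omega⟩))

open Matrix Finset

section Generic
variable {n : Type*} [DecidableEq n] [Fintype n] {A : Type*} [CommRing A] [Algebra ℂ A]

theorem derivation_finset_prod (D : Derivation ℂ A A) {ι : Type*} [DecidableEq ι] (s : Finset ι) (f : ι → A) :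
    D (∏ i ∈ s, f i) = ∑ i ∈ s, D (f i) * ∏ j ∈ s.erase i, f j := by
  induction s using Finset.induction with
  | empty => simp
  | insert _ _ hx ih =>
    rename_i a s
    rw [Finset.prod_insert hx, D.leibniz, Finset.sum_insert hx]
    rw [Finset.erase_insert hx]
    simp only [smul_eq_mul, ih, Finset.mul_sum]
    have hrw : ∀ b ∈ s, D (f b) * ∏ j ∈ (insert a s).erase b, f j
        = f a * (D (f b) * ∏ j ∈ s.erase b, f j) := by
      intro b hb
      have hab : a ≠ b := fun h => hx (h ▸ hb)
      rw [Finset.erase_insert_of_ne hab, Finset.prod_insert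
        (fun h => hx (Finset.mem_of_mem_erase h))]
      ring
    rw [Finset.sum_congr rfl hrw]
    ring

theorem derivation_det (D : Derivation ℂ A A) (M : Matrix n n A) :
    D M.det = ∑ c, (M.updateCol c fun i => D (M i c)).det := by
  rw [Matrix.det_apply, map_sum]
  conv_rhs => rw [show (fun c => (M.updateCol c fun i => D (M i c)).det) = fun c => ∑ σ : Equiv.Perm n, Equiv.Perm.sign σ • ∏ i, (M.updateCol c fun i => D (M i c)) (σ i) i from funext fun c => Matrix.det_apply _]
  rw [Finset.sum_comm]
  refine Finset.sum_congr rfl fun σ _ => ?_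
  rw [Units.smul_def, map_zsmul, derivation_finset_prod, Finset.smul_sum]
  refine Finset.sum_congr rfl fun c _ => ?_
  rw [Units.smul_def]
  congr 1
  rw [← Finset.mul_prod_erase Finset.univ _ (Finset.mem_univ c)]
  rw [Matrix.updateCol_apply, if_pos rfl]
  congr 1
  refine Finset.prod_congr rfl fun b hb => ?_
  rw [Matrix.updateCol_apply, if_neg (Finset.ne_of_mem_erase hb)]
end Generic

section Generic2
variable {n : Type*} [DecidableEq n] [Fintype n] {A : Type*} [CommRing A]

theorem det_updateCol_finset_sum {ι : Type*} [DecidableEq ι] (M : Matrix n n A) (l : n)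
    (s : Finset ι) (w : ι → n → A) :
    (M.updateCol l (∑ k ∈ s, w k)).det = ∑ k ∈ s, (M.updateCol l (w k)).det := by
  induction s using Finset.induction with
  | empty =>
    simp only [Finset.sum_empty]
    exact Matrix.det_eq_zero_of_column_eq_zero l (fun i => by simp [Matrix.updateCol_self])
  | insert _ _ hx ih =>
    rename_i a s
    rw [Finset.sum_insert hx, Finset.sum_insert hx, Matrix.det_updateCol_add, ih]

theorem det_update_expand (M : Matrix n n A) (l : n) (v : n → A) :
    (M.updateCol l v).det = ∑ k, v k * (M.updateCol l (Pi.single k 1)).det := by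
  have hv : v = ∑ k : n, v k • (Pi.single k 1 : n → A) := by
    ext j
    simp [Pi.single_apply, Finset.sum_apply]
  conv_lhs => rw [hv]
  rw [det_updateCol_finset_sum]
  exact Finset.sum_congr rfl fun k _ => Matrix.det_updateCol_smul M l (v k) (Pi.single k 1)

theorem updateCol_comm' (M : Matrix n n A) {j j' : n} (h : j ≠ j') (a b : n → A) :
    (M.updateCol j a).updateCol j' b = (M.updateCol j' b).updateCol j a := by
  ext i k
  simp only [Matrix.updateCol_apply]
  rcases eq_or_ne k j' with rfl | h1 <;> rcases eq_or_ne k j with rfl | h2 <;>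
    simp_all [Matrix.updateCol_apply]

theorem pderiv_pderiv_comm {σ : Type*} [DecidableEq σ] (i r : σ) (F : MvPolynomial σ ℂ) :
    pderiv i (pderiv r F) = pderiv r (pderiv i F) := by
  rcases eq_or_ne i r with rfl | h
  · rfl
  induction F using MvPolynomial.induction_on' with
  | add p q hp hq => simp [map_add, hp, hq]
  | monomial s a =>
    simp only [pderiv_monomial]
    have e1 : (s - Finsupp.single r 1 : _ →₀ ℕ) i = s i := by
      simp [Finsupp.single_apply, (Ne.symm h)]
    have e2 : (s - Finsupp.single i 1 : _ →₀ ℕ) r = s r := by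
      simp [Finsupp.single_apply, h]
    have e3 : s - Finsupp.single r 1 - Finsupp.single i 1
        = s - Finsupp.single i 1 - Finsupp.single r 1 := by
      ext k; simp only [Finsupp.coe_tsub, Pi.sub_apply, Finsupp.single_apply]; omega
    rw [e1, e2, e3]
    ring_nf
end Generic2

section DetNambu
variable {d : ℕ}

/-- gradient -/
noncomputable def gr (F : MvPolynomial (Fin d) ℂ) : Fin d → MvPolynomial (Fin d) ℂ :=
  fun i => pderiv i F

noncomputable def hess (P : MvPolynomial (Fin d) ℂ) (i r : Fin d) :
    MvPolynomial (Fin d) ℂ :=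
  pderiv i (pderiv r P)

theorem hess_symm (P : MvPolynomial (Fin d) ℂ) (i r : Fin d) :
    hess P i r = hess P r i := pderiv_pderiv_comm i r P

variable (hd : 2 < d) (C : Fin (d - 2) → MvPolynomial (Fin d) ℂ)

noncomputable def cmat (u v : Fin d → MvPolynomial (Fin d) ℂ) :
    Matrix (Fin d) (Fin d) (MvPolynomial (Fin d) ℂ) :=
  Matrix.of fun i j =>
    if (j : ℕ) = 0 then u i
    else if (j : ℕ) = 1 then v i
    else pderiv i (C ⟨(j : ℕ) - 2, by have := j.isLt; omega⟩)

def jj0 : Fin d := ⟨0, by omega⟩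
def jj1 : Fin d := ⟨1, by omega⟩

theorem jj0_ne_jj1 : jj0 hd ≠ jj1 hd := by
  simp [jj0, jj1, Fin.ext_iff]

theorem upd0 (u v w) : (cmat hd C u v).updateCol (jj0 hd) w = cmat hd C w v := by
  refine Matrix.ext fun i j => ?_
  rw [Matrix.updateCol_apply]
  by_cases h : j = jj0 hd
  · subst h; simp [cmat, jj0]
  · have h0 : (j : ℕ) ≠ 0 := fun hc => h (Fin.ext hc)
    simp [cmat, h, h0]

theorem upd1 (u v w) : (cmat hd C u v).updateCol (jj1 hd) w = cmat hd C u w := by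
  refine Matrix.ext fun i j => ?_
  rw [Matrix.updateCol_apply]
  by_cases h : j = jj1 hd
  · subst h; simp [cmat, jj1]
  · have h0 : (j : ℕ) ≠ 1 := fun hc => h (Fin.ext hc)
    simp [cmat, h, h0]

theorem cmat_swap_eq (u v) :
    cmat hd C v u = (cmat hd C u v).submatrix id (Equiv.swap (jj0 hd) (jj1 hd)) := by
  refine Matrix.ext fun i j => ?_
  rw [Matrix.submatrix_apply, id]
  by_cases h0 : j = jj0 hd
  · subst h0; rw [Equiv.swap_apply_left]; simp [cmat, jj0, jj1]
  by_cases h1 : j = jj1 hd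
  · subst h1; rw [Equiv.swap_apply_right]; simp [cmat, jj0, jj1]
  · rw [Equiv.swap_apply_of_ne_of_ne h0 h1]
    have e0 : (j : ℕ) ≠ 0 := fun hc => h0 (Fin.ext hc)
    have e1 : (j : ℕ) ≠ 1 := fun hc => h1 (Fin.ext hc)
    simp [cmat, e0, e1]

theorem cmat_swap_upd_eq (u v z) {c : Fin d} (hc : 2 ≤ (c : ℕ)) :
    (cmat hd C v u).updateCol c z
      = ((cmat hd C u v).updateCol c z).submatrix id (Equiv.swap (jj0 hd) (jj1 hd)) := by
  have hc0 : c ≠ jj0 hd := fun h => by simp [jj0, Fin.ext_iff] at h; omega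
  have hc1 : c ≠ jj1 hd := fun h => by simp [jj1, Fin.ext_iff] at h; omega
  refine Matrix.ext fun i j => ?_
  rw [Matrix.submatrix_apply, id]
  by_cases h0 : j = jj0 hd
  · subst h0
    rw [Equiv.swap_apply_left, Matrix.updateCol_apply, if_neg hc0.symm,
      Matrix.updateCol_apply, if_neg hc1.symm]
    simp [cmat, jj0, jj1]
  by_cases h1 : j = jj1 hd
  · subst h1
    rw [Equiv.swap_apply_right, Matrix.updateCol_apply, if_neg hc1.symm,
      Matrix.updateCol_apply, if_neg hc0.symm]
    simp [cmat, jj0, jj1]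
  · rw [Equiv.swap_apply_of_ne_of_ne h0 h1]
    rw [Matrix.updateCol_apply, Matrix.updateCol_apply]
    by_cases hjc : j = c
    · simp [hjc]
    · rw [if_neg hjc, if_neg hjc]
      have e0 : (j : ℕ) ≠ 0 := fun hcc => h0 (Fin.ext hcc)
      have e1 : (j : ℕ) ≠ 1 := fun hcc => h1 (Fin.ext hcc)
      simp [cmat, e0, e1]

theorem det_swap01 (M : Matrix (Fin d) (Fin d) (MvPolynomial (Fin d) ℂ)) :
    (M.submatrix id (Equiv.swap (jj0 hd) (jj1 hd))).det = - M.det := by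
  rw [Matrix.det_permute', Equiv.Perm.sign_swap (jj0_ne_jj1 hd)]
  simp

theorem det_cmat_swap (u v) : (cmat hd C v u).det = - (cmat hd C u v).det := by
  rw [cmat_swap_eq hd C u v, det_swap01]

theorem det_cmat_swap_upd (u v z) {c : Fin d} (hc : 2 ≤ (c : ℕ)) :
    ((cmat hd C v u).updateCol c z).det = - ((cmat hd C u v).updateCol c z).det := by
  rw [cmat_swap_upd_eq hd C u v z hc, det_swap01]

theorem det_cmat_dup (z v) (hzv : z = v) : (cmat hd C z v).det = 0 := by
  subst hzv
  refine Matrix.det_zero_of_column_eq (jj0_ne_jj1 hd) fun k => ?_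
  simp [cmat, jj0, jj1]

theorem det_cmat_Ccol {j : Fin d} (hj : 2 ≤ (j : ℕ)) (w z)
    (hw : ∀ i, w i = cmat hd C w z i j) : (cmat hd C w z).det = 0 := by
  have hne : jj0 hd ≠ j := fun h => by simp [jj0, Fin.ext_iff] at h; omega
  refine Matrix.det_zero_of_column_eq hne fun k => ?_
  have : cmat hd C w z k (jj0 hd) = w k := by simp [cmat, jj0]
  rw [this, hw k]

theorem E1' (u v) : (cmat hd C u v).det
    = ∑ k, v k * (cmat hd C u (Pi.single k 1)).det := by
  rw [← upd1 hd C u u v, det_update_expand]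
  exact Finset.sum_congr rfl fun k _ => by rw [upd1]

theorem E0' (u v) : (cmat hd C u v).det
    = ∑ k, u k * (cmat hd C (Pi.single k 1) v).det := by
  rw [← upd0 hd C u v u, det_update_expand]
  exact Finset.sum_congr rfl fun k _ => by rw [upd0]

theorem det_cmat_sum1 {ι : Type*} [DecidableEq ι] (u : Fin d → MvPolynomial (Fin d) ℂ)
    (s : Finset ι) (t : ι → Fin d → MvPolynomial (Fin d) ℂ) :
    (cmat hd C u (∑ k ∈ s, t k)).det = ∑ k ∈ s, (cmat hd C u (t k)).det := by
  rw [← upd1 hd C u u (∑ k ∈ s, t k), det_updateCol_finset_sum]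
  exact Finset.sum_congr rfl fun k _ => by rw [upd1]

theorem det_cmat_add1 (u v w) :
    (cmat hd C u (v + w)).det = (cmat hd C u v).det + (cmat hd C u w).det := by
  rw [← upd1 hd C u u (v + w), Matrix.det_updateCol_add, upd1, upd1]

noncomputable def DD (F : MvPolynomial (Fin d) ℂ) (k : Fin d) : MvPolynomial (Fin d) ℂ :=
  (cmat hd C (gr F) (Pi.single k 1)).det

noncomputable def EE (c : Fin d) (A B : MvPolynomial (Fin d) ℂ) (k : Fin d) :
    MvPolynomial (Fin d) ℂ :=
  ((cmat hd C (gr A) (gr B)).updateCol c (Pi.single k 1)).det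

noncomputable def Psi (A B : MvPolynomial (Fin d) ℂ) (c : Fin d) : MvPolynomial (Fin d) ℂ :=
  if (c : ℕ) = 0 then A
  else if (c : ℕ) = 1 then B
  else C ⟨(c : ℕ) - 2, by have := c.isLt; omega⟩

theorem cmat_entry (A B : MvPolynomial (Fin d) ℂ) (r c : Fin d) :
    cmat hd C (gr A) (gr B) r c = pderiv r (Psi hd C A B c) := by
  unfold cmat Psi gr
  by_cases h0 : (c : ℕ) = 0
  · simp [h0]
  by_cases h1 : (c : ℕ) = 1
  · simp [h0, h1]
  · simp [h0, h1]

theorem bracket_expand (F G H : MvPolynomial (Fin d) ℂ) :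
    detBracket d hd C F (detBracket d hd C G H)
      = ∑ c, ∑ i, ∑ r,
          hess (Psi hd C G H c) i r * EE hd C c G H r * DD hd C F i := by
  have hb : detBracket d hd C G H = (cmat hd C (gr G) (gr H)).det := rfl
  have hgrad : gr (detBracket d hd C G H)
      = ∑ c, fun i => ((cmat hd C (gr G) (gr H)).updateCol c
          (fun r => hess (Psi hd C G H c) i r)).det := by
    funext i
    rw [Finset.sum_apply]
    show pderiv i (detBracket d hd C G H) = _
    rw [hb, derivation_det (pderiv i)]
    refine Finset.sum_congr rfl fun c _ => ?_
    have hcol : (fun r => pderiv i (cmat hd C (gr G) (gr H) r c))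
        = fun r => hess (Psi hd C G H c) i r := by
      funext r
      rw [cmat_entry]
      rfl
    rw [hcol]
  have h2 : detBracket d hd C F (detBracket d hd C G H)
      = (cmat hd C (gr F) (gr (detBracket d hd C G H))).det := rfl
  rw [h2, hgrad, det_cmat_sum1]
  refine Finset.sum_congr rfl fun c _ => ?_
  rw [E1']
  refine Finset.sum_congr rfl fun i _ => ?_
  rw [det_update_expand, Finset.sum_mul]
  rfl

theorem Psi_j0 (A B : MvPolynomial (Fin d) ℂ) : Psi hd C A B (jj0 hd) = A := by
  simp [Psi, jj0]

theorem Psi_j1 (A B : MvPolynomial (Fin d) ℂ) : Psi hd C A B (jj1 hd) = B := by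
  simp [Psi, jj1]

theorem EE_j0 (A B : MvPolynomial (Fin d) ℂ) (r : Fin d) :
    EE hd C (jj0 hd) A B r = (cmat hd C (Pi.single r 1) (gr B)).det := by
  unfold EE
  rw [upd0]

theorem EE_j1 (A B : MvPolynomial (Fin d) ℂ) (r : Fin d) :
    EE hd C (jj1 hd) A B r = DD hd C A r := by
  unfold EE DD
  rw [upd1]

theorem cancel_pair (P X Y : MvPolynomial (Fin d) ℂ) :
    (∑ i, ∑ r, hess P i r * (cmat hd C (Pi.single r 1) (gr Y)).det * DD hd C X i)
      + (∑ i, ∑ r, hess P i r * DD hd C X r * DD hd C Y i) = 0 := by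
  have h1 : ∀ r : Fin d, (cmat hd C (Pi.single r 1) (gr Y)).det = - DD hd C Y r :=
    fun r => det_cmat_swap hd C (gr Y) (Pi.single r 1)
  have hcomm : (∑ i, ∑ r, hess P i r * DD hd C X r * DD hd C Y i)
      = ∑ i, ∑ r, hess P r i * DD hd C X i * DD hd C Y r := Finset.sum_comm
  rw [hcomm, ← Finset.sum_add_distrib]
  refine Finset.sum_eq_zero fun i _ => ?_
  rw [← Finset.sum_add_distrib]
  refine Finset.sum_eq_zero fun r _ => ?_
  rw [h1 r, hess_symm P r i]
  ring

theorem main01 (F G H : MvPolynomial (Fin d) ℂ) :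
    ((∑ i, ∑ r, hess (Psi hd C G H (jj0 hd)) i r * EE hd C (jj0 hd) G H r * DD hd C F i)
      + (∑ i, ∑ r, hess (Psi hd C H F (jj0 hd)) i r * EE hd C (jj0 hd) H F r * DD hd C G i)
      + (∑ i, ∑ r, hess (Psi hd C F G (jj0 hd)) i r * EE hd C (jj0 hd) F G r * DD hd C H i))
    + ((∑ i, ∑ r, hess (Psi hd C G H (jj1 hd)) i r * EE hd C (jj1 hd) G H r * DD hd C F i)
      + (∑ i, ∑ r, hess (Psi hd C H F (jj1 hd)) i r * EE hd C (jj1 hd) H F r * DD hd C G i)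
      + (∑ i, ∑ r, hess (Psi hd C F G (jj1 hd)) i r * EE hd C (jj1 hd) F G r * DD hd C H i))
    = 0 := by
  simp only [Psi_j0, Psi_j1, EE_j0, EE_j1]
  have c1 := cancel_pair hd C G F H
  have c2 := cancel_pair hd C H G F
  have c3 := cancel_pair hd C F H G
  linear_combination c1 + c2 + c3
noncomputable def Phi (F G H : MvPolynomial (Fin d) ℂ) (c : Fin d)
    (z w : Fin d → MvPolynomial (Fin d) ℂ) : MvPolynomial (Fin d) ℂ :=
  ((cmat hd C (gr G) (gr H)).updateCol c z).det * (cmat hd C (gr F) w).det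
  + ((cmat hd C (gr H) (gr F)).updateCol c z).det * (cmat hd C (gr G) w).det
  + ((cmat hd C (gr F) (gr G)).updateCol c z).det * (cmat hd C (gr H) w).det

theorem Phi_diag (F G H : MvPolynomial (Fin d) ℂ) {c : Fin d} (hc : 2 ≤ (c : ℕ))
    (z : Fin d → MvPolynomial (Fin d) ℂ) : Phi hd C F G H c z z = 0 := by
  have hc0 : c ≠ jj0 hd := fun h => by simp [jj0, Fin.ext_iff] at h; omega
  have hc1 : c ≠ jj1 hd := fun h => by simp [jj1, Fin.ext_iff] at h; omega
  set N := cmat hd C (gr G) (gr H) with hN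
  set A := N.updateCol c z with hA
  have cram : ∀ k, ∑ j, A k j * (A.updateCol j (gr F)).det = A.det * gr F k := by
    intro k
    have h := congrFun (Matrix.mulVec_cramer A (gr F)) k
    simpa [Matrix.mulVec, dotProduct, Matrix.cramer_apply, smul_eq_mul] using h
  have key : A.det * (cmat hd C (gr F) z).det
      = (A.updateCol (jj0 hd) (gr F)).det * (cmat hd C (gr G) z).det
        + (A.updateCol (jj1 hd) (gr F)).det * (cmat hd C (gr H) z).det := by
    have step1 : A.det * (cmat hd C (gr F) z).det
        = ∑ k, ∑ j, (A.updateCol j (gr F)).det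
            * (A k j * (cmat hd C (Pi.single k 1) z).det) := by
      rw [E0' hd C (gr F) z, Finset.mul_sum]
      refine Finset.sum_congr rfl fun k _ => ?_
      rw [show A.det * (gr F k * (cmat hd C (Pi.single k 1) z).det)
          = (A.det * gr F k) * (cmat hd C (Pi.single k 1) z).det from by ring,
        ← cram k, Finset.sum_mul]
      exact Finset.sum_congr rfl fun j _ => by ring
    rw [step1, Finset.sum_comm]
    have step2 : ∀ j, ∑ k, (A.updateCol j (gr F)).det
          * (A k j * (cmat hd C (Pi.single k 1) z).det)
        = (A.updateCol j (gr F)).det * (cmat hd C (fun k => A k j) z).det := by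
      intro j
      rw [← Finset.mul_sum, E0' hd C (fun k => A k j) z]
    rw [Finset.sum_congr rfl fun j _ => step2 j]
    have hvan : ∀ j ∈ (Finset.univ : Finset (Fin d)),
        j ∉ ({jj0 hd, jj1 hd} : Finset (Fin d)) →
        (A.updateCol j (gr F)).det * (cmat hd C (fun k => A k j) z).det = 0 := by
      intro j _ hj
      simp only [Finset.mem_insert, Finset.mem_singleton, not_or] at hj
      have hj2 : 2 ≤ (j : ℕ) := by
        rcases hj with ⟨hj0, hj1⟩
        have e0 : (j : ℕ) ≠ 0 := fun h => hj0 (Fin.ext h)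
        have e1 : (j : ℕ) ≠ 1 := fun h => hj1 (Fin.ext h)
        omega
      by_cases hjc : j = c
      · subst hjc
        have hz : (fun k => A k j) = z := by
          funext k
          rw [hA, Matrix.updateCol_self]
        rw [det_cmat_dup hd C _ z hz, mul_zero]
      · have hAj : ∀ k, A k j = N k j := by
          intro k
          rw [hA, Matrix.updateCol_apply, if_neg hjc]
        have hCc : ∀ i, (fun k => A k j) i = cmat hd C (fun k => A k j) z i j := by
          intro i
          show A i j = _
          rw [hAj i, hN]
          have e0 : (j : ℕ) ≠ 0 := fun h => hj.1 (Fin.ext h)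
          have e1 : (j : ℕ) ≠ 1 := fun h => hj.2 (Fin.ext h)
          simp [cmat, e0, e1]
        rw [det_cmat_Ccol hd C hj2 _ z hCc, mul_zero]
    rw [← Finset.sum_subset (Finset.subset_univ {jj0 hd, jj1 hd}) hvan,
      Finset.sum_pair (jj0_ne_jj1 hd)]
    have hcol0 : (fun k => A k (jj0 hd)) = gr G := by
      funext k
      rw [hA, Matrix.updateCol_apply, if_neg hc0.symm, hN]
      simp [cmat, jj0]
    have hcol1 : (fun k => A k (jj1 hd)) = gr H := by
      funext k
      rw [hA, Matrix.updateCol_apply, if_neg hc1.symm, hN]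
      simp [cmat, jj1]
    rw [hcol0, hcol1]
  have e0 : A.updateCol (jj0 hd) (gr F)
      = (cmat hd C (gr F) (gr H)).updateCol c z := by
    rw [hA, updateCol_comm' N hc0 z (gr F)]
    rw [hN, upd0]
  have e1 : A.updateCol (jj1 hd) (gr F)
      = (cmat hd C (gr G) (gr F)).updateCol c z := by
    rw [hA, updateCol_comm' N hc1 z (gr F)]
    rw [hN, upd1]
  rw [e0, e1] at key
  have s1 := det_cmat_swap_upd hd C (gr F) (gr H) z hc
  have s2 := det_cmat_swap_upd hd C (gr G) (gr F) z hc
  unfold Phi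
  linear_combination key + (cmat hd C (gr G) z).det * s1 + (cmat hd C (gr H) z).det * s2
theorem Phi_add_left (F G H : MvPolynomial (Fin d) ℂ) (c : Fin d)
    (z z' w : Fin d → MvPolynomial (Fin d) ℂ) :
    Phi hd C F G H c (z + z') w = Phi hd C F G H c z w + Phi hd C F G H c z' w := by
  unfold Phi
  rw [Matrix.det_updateCol_add, Matrix.det_updateCol_add, Matrix.det_updateCol_add]
  ring

theorem Phi_add_right (F G H : MvPolynomial (Fin d) ℂ) (c : Fin d)
    (z w w' : Fin d → MvPolynomial (Fin d) ℂ) :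
    Phi hd C F G H c z (w + w') = Phi hd C F G H c z w + Phi hd C F G H c z w' := by
  unfold Phi
  rw [det_cmat_add1, det_cmat_add1, det_cmat_add1]
  ring

theorem Phi_skew (F G H : MvPolynomial (Fin d) ℂ) {c : Fin d} (hc : 2 ≤ (c : ℕ))
    (z w : Fin d → MvPolynomial (Fin d) ℂ) :
    Phi hd C F G H c z w = - Phi hd C F G H c w z := by
  have h := Phi_diag hd C F G H hc (z + w)
  rw [Phi_add_left, Phi_add_right, Phi_add_right] at h
  have hz := Phi_diag hd C F G H hc z
  have hw := Phi_diag hd C F G H hc w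
  linear_combination h - hz - hw

theorem masterC (F G H : MvPolynomial (Fin d) ℂ) {c : Fin d} (hc : 2 ≤ (c : ℕ)) :
    (∑ i, ∑ r, hess (Psi hd C G H c) i r * EE hd C c G H r * DD hd C F i)
    + (∑ i, ∑ r, hess (Psi hd C H F c) i r * EE hd C c H F r * DD hd C G i)
    + (∑ i, ∑ r, hess (Psi hd C F G c) i r * EE hd C c F G r * DD hd C H i) = 0 := by
  have hc0 : (c : ℕ) ≠ 0 := by omega
  have hc1 : (c : ℕ) ≠ 1 := by omega
  have hPsi : ∀ A B : MvPolynomial (Fin d) ℂ, Psi hd C A B c = Psi hd C G H c := by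
    intro A B
    simp [Psi, hc0, hc1]
  rw [hPsi H F, hPsi F G]
  set P := Psi hd C G H c with hP
  rw [← Finset.sum_add_distrib, ← Finset.sum_add_distrib]
  have hco : ∀ i r : Fin d,
      (hess P i r * EE hd C c G H r * DD hd C F i
        + hess P i r * EE hd C c H F r * DD hd C G i)
        + hess P i r * EE hd C c F G r * DD hd C H i
      = hess P i r * Phi hd C F G H c (Pi.single r 1) (Pi.single i 1) := by
    intro i r
    simp only [EE, DD, Phi]
    ring
  have hsum : ∀ i : Fin d,
      ((∑ r, hess P i r * EE hd C c G H r * DD hd C F i)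
        + ∑ r, hess P i r * EE hd C c H F r * DD hd C G i)
        + ∑ r, hess P i r * EE hd C c F G r * DD hd C H i
      = ∑ r, hess P i r * Phi hd C F G H c (Pi.single r 1) (Pi.single i 1) := by
    intro i
    rw [← Finset.sum_add_distrib, ← Finset.sum_add_distrib]
    exact Finset.sum_congr rfl fun r _ => hco i r
  rw [Finset.sum_congr rfl fun i _ => hsum i]
  have hskew : ∀ i r : Fin d, Phi hd C F G H c (Pi.single r 1) (Pi.single i 1)
      = - Phi hd C F G H c (Pi.single i 1) (Pi.single r 1) :=
    fun i r => Phi_skew hd C F G H hc _ _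
  have h1 : (∑ i, ∑ r, hess P i r * Phi hd C F G H c (Pi.single r 1) (Pi.single i 1))
      = - ∑ i, ∑ r, hess P i r * Phi hd C F G H c (Pi.single i 1) (Pi.single r 1) := by
    rw [← Finset.sum_neg_distrib]
    refine Finset.sum_congr rfl fun i _ => ?_
    rw [← Finset.sum_neg_distrib]
    refine Finset.sum_congr rfl fun r _ => ?_
    rw [hskew i r]
    ring
  have h2 : (∑ i, ∑ r, hess P i r * Phi hd C F G H c (Pi.single i 1) (Pi.single r 1))
      = ∑ i, ∑ r, hess P i r * Phi hd C F G H c (Pi.single r 1) (Pi.single i 1) := by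
    rw [Finset.sum_comm]
    refine Finset.sum_congr rfl fun i _ => Finset.sum_congr rfl fun r _ => ?_
    rw [hess_symm]
  rw [h2] at h1
  have h3 : (2 : ℂ) • (∑ i, ∑ r, hess P i r
      * Phi hd C F G H c (Pi.single r 1) (Pi.single i 1)) = 0 := by
    rw [two_smul]
    linear_combination h1
  rcases smul_eq_zero.mp h3 with h | h
  · exact absurd h two_ne_zero
  · exact h
end DetNambu

/-- The determinantal bracket satisfies the Jacobi identity. -/
theorem detBracket_jacobi (d : ℕ) (hd : 2 < d)
    (C : Fin (d - 2) → MvPolynomial (Fin d) ℂ)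
    (F G H : MvPolynomial (Fin d) ℂ) :
    detBracket d hd C F (detBracket d hd C G H) +
      detBracket d hd C G (detBracket d hd C H F) +
      detBracket d hd C H (detBracket d hd C F G) = 0 := by
  rw [bracket_expand hd C F G H, bracket_expand hd C G H F, bracket_expand hd C H F G]
  rw [← Finset.sum_add_distrib, ← Finset.sum_add_distrib]
  have hvan : ∀ c ∈ (Finset.univ : Finset (Fin d)),
      c ∉ ({jj0 hd, jj1 hd} : Finset (Fin d)) →
      ((∑ i, ∑ r, hess (Psi hd C G H c) i r * EE hd C c G H r * DD hd C F i)
      + (∑ i, ∑ r, hess (Psi hd C H F c) i r * EE hd C c H F r * DD hd C G i))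
      + (∑ i, ∑ r, hess (Psi hd C F G c) i r * EE hd C c F G r * DD hd C H i) = 0 := by
    intro c _ hc
    simp only [Finset.mem_insert, Finset.mem_singleton, not_or] at hc
    have e0 : (c : ℕ) ≠ 0 := fun h => hc.1 (Fin.ext h)
    have e1 : (c : ℕ) ≠ 1 := fun h => hc.2 (Fin.ext h)
    exact masterC hd C F G H (by omega)
  rw [← Finset.sum_subset (Finset.subset_univ {jj0 hd, jj1 hd}) hvan,
    Finset.sum_pair (jj0_ne_jj1 hd)]
  exact main01 hd C F G H
end

section
/- Let K be a field of characteristic ≠ 2, let d ≥ 2, and let M, M' be skew-symmetric d×d matrices over K (Mᵀ = −M and M'ᵀ = −M'). Assume that the kernels of the linear maps v ↦ M·v and v ↦ M'·v coincide and have dimension d − 2. Then there exists r ∈ K with M' = r • M. -/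
/-!
For a skew matrix `M` the form `x ⬝ᵥ M *ᵥ y` is alternating (as `2 ≠ 0`) and its radical is
`ker M`. If `a ⬝ᵥ M *ᵥ b ≠ 0`, then `a` and `b` are independent modulo `ker M`, so together with
this kernel of codimension two they span everything. Choosing `r` with
`a ⬝ᵥ (M' - r • M) *ᵥ b = 0`, the alternating form of `M' - r • M` vanishes on `a`, `b` and on the
common kernel, hence identically.
-/

open Matrix Module Submodule LinearMap

namespace Matrix

variable {R : Type*} [CommRing R] {n : Type*} [Fintype n] {M : Matrix n n R}

theorem dotProduct_mulVec_eq_neg_of_transpose_eq_neg (hM : Mᵀ = -M) (x y : n → R) :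
    x ⬝ᵥ M *ᵥ y = -(y ⬝ᵥ M *ᵥ x) := by
  rw [dotProduct_mulVec, ← mulVec_transpose, hM, neg_mulVec, neg_dotProduct, dotProduct_comm]

theorem dotProduct_mulVec_self_eq_zero_of_transpose_eq_neg [NoZeroDivisors R] (h2 : (2 : R) ≠ 0)
    (hM : Mᵀ = -M) (x : n → R) : x ⬝ᵥ M *ᵥ x = 0 := by
  have hneg := dotProduct_mulVec_eq_neg_of_transpose_eq_neg hM x x
  have htwice : 2 * (x ⬝ᵥ M *ᵥ x) = 0 := by linear_combination hneg
  exact (mul_eq_zero.mp htwice).resolve_left h2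

theorem dotProduct_mulVec_eq_zero_of_mem_ker (hM : Mᵀ = -M) {x : n → R}
    (hx : x ∈ ker M.mulVecLin) (y : n → R) : x ⬝ᵥ M *ᵥ y = 0 := by
  rw [dotProduct_mulVec_eq_neg_of_transpose_eq_neg hM, show M *ᵥ x = 0 from hx, dotProduct_zero,
    neg_zero]

theorem exists_dotProduct_mulVec_ne_zero [DecidableEq n] (hM : M ≠ 0) :
    ∃ a b : n → R, a ⬝ᵥ M *ᵥ b ≠ 0 := by
  obtain ⟨i, j, hij⟩ : ∃ i j, M i j ≠ 0 := by
    by_contra! h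
    exact hM (Matrix.ext h)
  exact ⟨Pi.single i 1, Pi.single j 1, by simpa [mulVec_single_one, single_dotProduct] using hij⟩

theorem eq_zero_of_dotProduct_mulVec_eq_zero_of_span_eq_top [DecidableEq n] {s : Set (n → R)}
    (hs : span R s = ⊤) (h : ∀ x ∈ s, ∀ y ∈ s, x ⬝ᵥ M *ᵥ y = 0) : M = 0 := by
  refine toBilin'.map_eq_zero_iff.mp (ext_on hs fun x hx ↦ ext_on hs fun y hy ↦ ?_)
  simpa [toBilin'_apply'] using h x hx y hy

theorem eq_zero_of_transpose_eq_neg_of_span_pair_sup_eq_top [NoZeroDivisors R] [DecidableEq n]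
    (h2 : (2 : R) ≠ 0) (hM : Mᵀ = -M) {W : Submodule R (n → R)} (hW : W ≤ ker M.mulVecLin)
    {a b : n → R} (hspan : span R {a, b} ⊔ W = ⊤) (hab : a ⬝ᵥ M *ᵥ b = 0) : M = 0 := by
  have hba : b ⬝ᵥ M *ᵥ a = 0 := by
    rw [dotProduct_mulVec_eq_neg_of_transpose_eq_neg hM, hab, neg_zero]
  have hself := dotProduct_mulVec_self_eq_zero_of_transpose_eq_neg h2 hM
  refine eq_zero_of_dotProduct_mulVec_eq_zero_of_span_eq_top (s := {a, b} ∪ W)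
    (by rw [span_union, span_eq, hspan]) ?_
  rintro x (hx | hx) y (hy | hy)
  · simp only [Set.mem_insert_iff, Set.mem_singleton_iff] at hx hy
    rcases hx with rfl | rfl <;> rcases hy with rfl | rfl
    exacts [hself _, hab, hba, hself _]
  · rw [show M *ᵥ y = 0 from hW hy, dotProduct_zero]
  all_goals exact dotProduct_mulVec_eq_zero_of_mem_ker hM (hW hx) y

variable {K : Type*} [Field K] {N : Matrix n n K}

theorem smul_add_smul_mem_ker_iff (h2 : (2 : K) ≠ 0) (hN : Nᵀ = -N) {a b : n → K}
    (hab : a ⬝ᵥ N *ᵥ b ≠ 0) {s t : K} : s • a + t • b ∈ ker N.mulVecLin ↔ s = 0 ∧ t = 0 := by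
  refine ⟨fun h ↦ ?_, by rintro ⟨rfl, rfl⟩; simp⟩
  have hsum : N *ᵥ (s • a + t • b) = 0 := h
  have hpair_a := congrArg (a ⬝ᵥ ·) hsum
  have hpair_b := congrArg (b ⬝ᵥ ·) hsum
  simp only [mulVec_add, mulVec_smul, dotProduct_add, dotProduct_smul, smul_eq_mul,
    dotProduct_mulVec_self_eq_zero_of_transpose_eq_neg h2 hN,
    dotProduct_mulVec_eq_neg_of_transpose_eq_neg hN b a,
    dotProduct_zero, mul_zero, zero_add, add_zero, mul_neg, neg_eq_zero] at hpair_a hpair_b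
  exact ⟨(mul_eq_zero.mp hpair_b).resolve_right hab, (mul_eq_zero.mp hpair_a).resolve_right hab⟩

theorem span_pair_sup_ker_eq_top (h2 : (2 : K) ≠ 0) (hN : Nᵀ = -N)
    (hdim : Fintype.card n ≤ finrank K (ker N.mulVecLin) + 2) {a b : n → K}
    (hab : a ⬝ᵥ N *ᵥ b ≠ 0) : span K {a, b} ⊔ ker N.mulVecLin = ⊤ := by
  set W := ker N.mulVecLin
  have hind : LinearIndependent K ![W.mkQ a, W.mkQ b] := by
    refine LinearIndependent.pair_iff.mpr fun s t hst ↦ (smul_add_smul_mem_ker_iff h2 hN hab).mp ?_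
    rw [← Quotient.mk_eq_zero]
    simpa using hst
  have hquot : finrank K ((n → K) ⧸ W) = 2 := by
    have := W.finrank_quotient_add_finrank
    have := hind.fintype_card_le_finrank
    simp only [finrank_fintype_fun_eq_card, Fintype.card_fin] at *
    omega
  rw [sup_comm, ← map_mkQ_eq_top, Submodule.map_span, Set.image_pair,
    ← range_cons_cons_empty _ _ ![]]
  exact hind.span_eq_top_of_card_eq_finrank (by simp [hquot])

end Matrix

theorem skew_matrices_proportional_of_common_kernel_general
    (K : Type*) [Field K] (hchar : ringChar K ≠ 2)
    (d : ℕ)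
    (M M' : Matrix (Fin d) (Fin d) K)
    (hM : Mᵀ = -M) (hM' : M'ᵀ = -M')
    (hker : LinearMap.ker M.mulVecLin = LinearMap.ker M'.mulVecLin)
    (hdim : Module.finrank K (LinearMap.ker M.mulVecLin) = d - 2) :
    ∃ r : K, M' = r • M := by
  have h2 : (2 : K) ≠ 0 := Ring.two_ne_zero hchar
  rcases eq_or_ne M 0 with rfl | hM0
  · refine ⟨0, ?_⟩
    rw [zero_smul, ← toLin'.map_eq_zero_iff, toLin'_apply', ← ker_eq_top, ← hker, mulVecLin_zero,
      ker_zero]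
  obtain ⟨a, b, hab⟩ := exists_dotProduct_mulVec_ne_zero hM0
  have hspan := span_pair_sup_ker_eq_top h2 hM (by simp [hdim]; omega) hab
  set r := (a ⬝ᵥ M' *ᵥ b) / (a ⬝ᵥ M *ᵥ b)
  refine ⟨r, sub_eq_zero.mp
    (eq_zero_of_transpose_eq_neg_of_span_pair_sup_eq_top h2 ?_ ?_ hspan ?_)⟩
  · rw [transpose_sub, transpose_smul, hM, hM', smul_neg, neg_sub_neg, neg_sub]
  · intro x hx
    have hMx : M *ᵥ x = 0 := hx
    have hM'x : M' *ᵥ x = 0 := (hker ▸ hx : x ∈ ker M'.mulVecLin)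
    simp [hMx, hM'x]
  · rw [sub_mulVec, smul_mulVec, dotProduct_sub, dotProduct_smul, smul_eq_mul,
      div_mul_cancel₀ _ hab, sub_self]

/-- Two skew-symmetric `d × d` matrices over a field of characteristic `≠ 2`,
whose kernels coincide and have dimension `d − 2`, are proportional. -/
theorem skew_matrices_proportional_of_common_kernel
    (K : Type*) [Field K] (hchar : ringChar K ≠ 2)
    (d : ℕ) (hd : 2 ≤ d)
    (M M' : Matrix (Fin d) (Fin d) K)
    (hM : Mᵀ = -M) (hM' : M'ᵀ = -M')
    (hker : LinearMap.ker M.mulVecLin = LinearMap.ker M'.mulVecLin)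
    (hdim : Module.finrank K (LinearMap.ker M.mulVecLin) = d - 2) :
    ∃ r : K, M' = r • M :=
  skew_matrices_proportional_of_common_kernel_general K hchar d M M' hM hM' hker hdim
end

section
/- Let d > 2 and let M, M' be nonzero skew-symmetric d×d matrices with entries in ℂ[x₁, …, x_d] (Mᵀ = −M, M'ᵀ = −M'). Let C₁, …, C_{d−2} ∈ ℂ[x₁, …, x_d] be polynomials whose gradient vectors ∇C₁, …, ∇C_{d−2} ∈ (ℂ[x₁, …, x_d])^d are linearly independent over the field of fractions ℂ(x₁, …, x_d), and suppose that M·∇C_k = 0 and M'·∇C_k = 0 for every k = 1, …, d−2. Then there exist polynomials P, Q ∈ ℂ[x₁, …, x_d] with Q ≠ 0 such that Q·M' = P·M (entrywise), i.e. M' = (P/Q)·M as matrices over ℂ(x₁, …, x_d). -/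
open Matrix

open MvPolynomial

set_option synthInstance.maxHeartbeats 1000000
set_option maxHeartbeats 1000000

section Aux

variable {K : Type*} [Field K] [CharZero K]

lemma aux_exists_minor {d : ℕ} {u v : Fin d → K}
    (h : LinearIndependent K ![u, v]) :
    ∃ j₁ j₂, u j₁ * v j₂ - u j₂ * v j₁ ≠ 0 := by
  by_contra hmin
  push_neg at hmin
  rw [linearIndependent_fin2] at h
  obtain ⟨hv, hne⟩ := h
  have hv' : ∃ j, v j ≠ 0 := by
    by_contra h0
    push_neg at h0
    apply hv
    funext j
    simpa using h0 j
  obtain ⟨j, hj⟩ := hv'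
  apply hne (u j / v j)
  show (u j / v j) • v = u
  funext j'
  have := hmin j j'
  simp only [Pi.smul_apply, smul_eq_mul]
  field_simp
  linear_combination this

lemma aux_rep_skew {d : ℕ} (A : Matrix (Fin d) (Fin d) K)
    (u v p q : Fin d → K)
    (hrep : ∀ i j, A i j = p i * u j + q i * v j)
    (hskew : ∀ i j, A i j + A j i = 0)
    (j₁ j₂ : Fin d) (he : u j₁ * v j₂ - u j₂ * v j₁ ≠ 0) :
    ∃ β : K, ∀ i j,
      (u j₁ * v j₂ - u j₂ * v j₁) * A i j = β * (v i * u j - u i * v j) := by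
  set e := u j₁ * v j₂ - u j₂ * v j₁ with hedef
  have hS : ∀ i j, p i * u j + q i * v j + (p j * u i + q j * v i) = 0 := by
    intro i j
    linear_combination hskew i j - hrep i j - hrep j i
  set a := p j₂ * v j₁ - p j₁ * v j₂ with hadef
  set bb := q j₂ * v j₁ - q j₁ * v j₂ with hbdef
  set c := p j₁ * u j₂ - p j₂ * u j₁ with hcdef
  set f := q j₁ * u j₂ - q j₂ * u j₁ with hfdef
  have hB : ∀ i j, e * A i j =
      a * (u i * u j) + bb * (v i * u j) + c * (u i * v j) + f * (v i * v j) := by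
    intro i j
    linear_combination e * hrep i j + u j * (v j₂ * hS i j₁ - v j₁ * hS i j₂)
      + v j * (u j₁ * hS i j₂ - u j₂ * hS i j₁)
  have hEE : ∀ i j, a * (u i * u j) + bb * (v i * u j) + c * (u i * v j) + f * (v i * v j)
      + (a * (u j * u i) + bb * (v j * u i) + c * (u j * v i) + f * (v j * v i)) = 0 := by
    intro i j
    linear_combination - hB i j - hB j i + e * hskew i j
  have E1 := hEE j₁ j₁
  have E2 := hEE j₂ j₂
  have E3 := hEE j₁ j₂
  have h2e : (2 : K) * e ^ 2 ≠ 0 := by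
    apply mul_ne_zero two_ne_zero (pow_ne_zero 2 he)
  have ha : a = 0 := by
    have h2 : a * (2 * e ^ 2) = 0 := by
      linear_combination (v j₂) ^ 2 * E1 + (v j₁) ^ 2 * E2 - 2 * (v j₁ * v j₂) * E3
    rcases mul_eq_zero.mp h2 with h | h
    · exact h
    · exact absurd h h2e
  have hf : f = 0 := by
    have h2 : f * (2 * e ^ 2) = 0 := by
      linear_combination (u j₂) ^ 2 * E1 + (u j₁) ^ 2 * E2 - 2 * (u j₁ * u j₂) * E3
    rcases mul_eq_zero.mp h2 with h | h
    · exact h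
    · exact absurd h h2e
  set m := bb + c with hmdef
  have h1 : m * (u j₁ * v j₁) = 0 := by
    linear_combination (1/2 : K) * E1 - (u j₁ ^ 2) * ha - (v j₁ ^ 2) * hf
  have h2 : m * (u j₂ * v j₂) = 0 := by
    linear_combination (1/2 : K) * E2 - (u j₂ ^ 2) * ha - (v j₂ ^ 2) * hf
  have h3 : m * (u j₁ * v j₂) + m * (u j₂ * v j₁) = 0 := by
    linear_combination E3 - 2 * (u j₁ * u j₂) * ha - 2 * (v j₁ * v j₂) * hf
  have hxy : (m * (u j₁ * v j₂)) * (m * (u j₂ * v j₁)) = 0 := by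
    calc (m * (u j₁ * v j₂)) * (m * (u j₂ * v j₁))
        = (m * (u j₁ * v j₁)) * (m * (u j₂ * v j₂)) := by ring
      _ = 0 := by rw [h1]; ring
  have hx : m * (u j₁ * v j₂) = 0 := by
    have hsq : (m * (u j₁ * v j₂)) ^ 2 = 0 := by
      linear_combination (m * (u j₁ * v j₂)) * h3 - hxy
    exact pow_eq_zero_iff (n := 2) (by norm_num) |>.mp hsq
  have hy : m * (u j₂ * v j₁) = 0 := by linear_combination h3 - hx
  have hme : m * e = 0 := by
    rw [hedef]; linear_combination hx - hy
  have hm : m = 0 := by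
    rcases mul_eq_zero.mp hme with h | h
    · exact h
    · exact absurd h he
  refine ⟨bb, fun i j => ?_⟩
  rw [hB i j]
  linear_combination (u i * u j) * ha + (v i * v j) * hf + (u i * v j) * hm

lemma aux_skew_cross {d : ℕ} (hd : 2 < d)
    (A A' : Matrix (Fin d) (Fin d) K)
    (hA : Aᵀ = -A) (hA' : A'ᵀ = -A')
    (g : Fin (d - 2) → Fin d → K) (hg : LinearIndependent K g)
    (hk : ∀ k, A.mulVec (g k) = 0) (hk' : ∀ k, A'.mulVec (g k) = 0) :
    ∀ i₀ j₀ i j, A i₀ j₀ * A' i j = A' i₀ j₀ * A i j := by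
  classical
  set G : Matrix (Fin (d - 2)) (Fin d) K := Matrix.of g with hG
  set φ : (Fin d → K) →ₗ[K] (Fin (d - 2) → K) := G.mulVecLin with hφ
  have hrank : G.rank = d - 2 := by
    rw [← Matrix.rank_transpose, Matrix.rank_eq_finrank_span_cols]
    have hr : (Set.range Gᵀ.col) = Set.range g := rfl
    rw [hr, finrank_span_eq_card hg, Fintype.card_fin]
  have hker2 : Module.finrank K (LinearMap.ker φ) = 2 := by
    have h1 := LinearMap.finrank_range_add_finrank_ker φ
    rw [Module.finrank_fin_fun] at h1
    have h2 : Module.finrank K (LinearMap.range φ) = d - 2 := hrank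
    omega
  set W := LinearMap.ker φ with hW
  let b : Module.Basis (Fin 2) K W := Module.finBasisOfFinrankEq K W hker2
  set u : Fin d → K := ((b 0 : W) : Fin d → K) with hu
  set v : Fin d → K := ((b 1 : W) : Fin d → K) with hv
  have hbind : LinearIndependent K ![u, v] := by
    have h1 := b.linearIndependent.map' W.subtype (Submodule.ker_subtype W)
    have h2 : ![u, v] = W.subtype ∘ b := by
      funext i
      fin_cases i <;> rfl
    rw [h2]
    exact h1
  obtain ⟨j₁, j₂, he⟩ := aux_exists_minor hbind
  have hrowmem : ∀ (B : Matrix (Fin d) (Fin d) K), (∀ k, B.mulVec (g k) = 0) →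
      ∀ i, (fun j => B i j) ∈ W := by
    intro B hB i
    rw [hW, LinearMap.mem_ker, hφ]
    funext k
    have h0 := congrFun (hB k) i
    simp only [Matrix.mulVec, dotProduct, Pi.zero_apply] at h0 ⊢
    rw [Matrix.mulVecLin_apply]
    simp only [Matrix.mulVec, dotProduct, hG, Matrix.of_apply]
    rw [← h0]
    exact Finset.sum_congr rfl fun j _ => mul_comm _ _
  have hrepgen : ∀ (B : Matrix (Fin d) (Fin d) K), (∀ k, B.mulVec (g k) = 0) →
      ∃ p q : Fin d → K, ∀ i j, B i j = p i * u j + q i * v j := by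
    intro B hB
    refine ⟨fun i => b.repr ⟨_, hrowmem B hB i⟩ 0, fun i => b.repr ⟨_, hrowmem B hB i⟩ 1, ?_⟩
    intro i j
    have hs := b.sum_repr ⟨fun j => B i j, hrowmem B hB i⟩
    rw [Fin.sum_univ_two] at hs
    have hs' := congrFun (congrArg (Subtype.val) hs) j
    simp only [Submodule.coe_add, Submodule.coe_smul_of_tower, Pi.add_apply, Pi.smul_apply,
      smul_eq_mul] at hs'
    rw [← hs']
  have hskewA : ∀ i j, A i j + A j i = 0 := by
    intro i j
    have h1 : A i j = -A j i := congrFun (congrFun hA j) i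
    linear_combination h1
  have hskewA' : ∀ i j, A' i j + A' j i = 0 := by
    intro i j
    have h1 : A' i j = -A' j i := congrFun (congrFun hA' j) i
    linear_combination h1
  obtain ⟨p, q, hrep⟩ := hrepgen A hk
  obtain ⟨p', q', hrep'⟩ := hrepgen A' hk'
  obtain ⟨β, hβ⟩ := aux_rep_skew A u v p q hrep hskewA j₁ j₂ he
  obtain ⟨β', hβ'⟩ := aux_rep_skew A' u v p' q' hrep' hskewA' j₁ j₂ he
  intro i₀ j₀ i j
  set e := u j₁ * v j₂ - u j₂ * v j₁ with hedef
  have key : (e * A i₀ j₀) * (e * A' i j) = (e * A' i₀ j₀) * (e * A i j) := by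
    rw [hβ i₀ j₀, hβ' i j, hβ' i₀ j₀, hβ i j]
    ring
  apply mul_left_cancel₀ (mul_ne_zero he he)
  linear_combination key

end Aux

/-- Two nonzero skew-symmetric polynomial matrices annihilating the gradients of
`d − 2` polynomials whose gradients are linearly independent over the fraction
field differ by a rational function factor: `Q • M' = P • M` with `Q ≠ 0`. -/
theorem skew_polynomial_matrices_rational_factor
    (d : ℕ) (hd : 2 < d)
    (M M' : Matrix (Fin d) (Fin d) (MvPolynomial (Fin d) ℂ))
    (hM0 : M ≠ 0) (hM'0 : M' ≠ 0)
    (hM : Mᵀ = -M) (hM' : M'ᵀ = -M')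
    (C : Fin (d - 2) → MvPolynomial (Fin d) ℂ)
    (hind : LinearIndependent (FractionRing (MvPolynomial (Fin d) ℂ))
      (fun (k : Fin (d - 2)) (i : Fin d) =>
        algebraMap (MvPolynomial (Fin d) ℂ) (FractionRing (MvPolynomial (Fin d) ℂ))
          (pderiv i (C k))))
    (hker : ∀ k, M.mulVec (fun i => pderiv i (C k)) = 0)
    (hker' : ∀ k, M'.mulVec (fun i => pderiv i (C k)) = 0) :
    ∃ P Q : MvPolynomial (Fin d) ℂ, Q ≠ 0 ∧ Q • M' = P • M := by
  classical
  have hinj : Function.Injective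
      (algebraMap (MvPolynomial (Fin d) ℂ) (FractionRing (MvPolynomial (Fin d) ℂ))) :=
    IsFractionRing.injective _ _
  haveI : CharZero (FractionRing (MvPolynomial (Fin d) ℂ)) :=
    charZero_of_injective_algebraMap hinj
  set ψ : MvPolynomial (Fin d) ℂ →+* FractionRing (MvPolynomial (Fin d) ℂ) :=
    algebraMap _ _ with hψ
  have hskewA : (M.map ψ)ᵀ = -(M.map ψ) := by
    ext i j
    have h1 := congrFun (congrFun hM i) j
    simp only [Matrix.transpose_apply, Matrix.neg_apply] at h1 ⊢
    simp only [Matrix.map_apply, h1, map_neg]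
  have hskewA' : (M'.map ψ)ᵀ = -(M'.map ψ) := by
    ext i j
    have h1 := congrFun (congrFun hM' i) j
    simp only [Matrix.transpose_apply, Matrix.neg_apply] at h1 ⊢
    simp only [Matrix.map_apply, h1, map_neg]
  have hmv : ∀ (B : Matrix (Fin d) (Fin d) (MvPolynomial (Fin d) ℂ)) k,
      B.mulVec (fun i => pderiv i (C k)) = 0 →
      (B.map ψ).mulVec (fun i => ψ (pderiv i (C k))) = 0 := by
    intro B k hB
    funext i
    have h0 := congrFun hB i
    simp only [Matrix.mulVec, dotProduct, Pi.zero_apply] at h0 ⊢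
    simp only [Matrix.map_apply]
    simp_rw [← ψ.map_mul]
    rw [← map_sum ψ (fun j => B i j * pderiv j (C k)) Finset.univ, h0, ψ.map_zero]
  have cross := aux_skew_cross hd (M.map ψ) (M'.map ψ) hskewA hskewA'
    (fun k i => ψ (pderiv i (C k))) hind
    (fun k => hmv M k (hker k)) (fun k => hmv M' k (hker' k))
  have hent : ∃ i₀ j₀, M i₀ j₀ ≠ 0 := by
    by_contra h0
    push_neg at h0
    apply hM0
    refine Matrix.ext fun i j => ?_
    exact h0 i j
  obtain ⟨i₀, j₀, hQ⟩ := hent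
  refine ⟨M' i₀ j₀, M i₀ j₀, hQ, ?_⟩
  refine Matrix.ext fun i j => ?_
  simp only [Matrix.smul_apply, smul_eq_mul]
  apply hinj
  rw [_root_.map_mul, _root_.map_mul]
  have h2 := cross i₀ j₀ i j
  simp only [Matrix.map_apply] at h2
  exact h2
end

section
/- Let k, m ≥ 1, let n : Fin k → ℕ, and let ν : Fin m → ℤ satisfy Σ_{p} (ν_p + 1) = 0. Equip R := ℂ[q₁, …, q_k] with the weights w_j := n_j + 2 on the variables. Let A be a skew-symmetric k×k matrix over R (Aᵀ = −A) whose entry A i j is quasi-homogeneous of quasi-degree n_i + n_j + 2 relative to w; let B be a k×m matrix over R whose entry B i p is quasi-homogeneous of quasi-degree n_i + ν_p + 2; and let C be a skew-symmetric m×m matrix over R (Cᵀ = −C) whose entry C l p is quasi-homogeneous of quasi-degree ν_l + ν_p + 2 and whose determinant det C is a unit of R. Then the matrix Λ := A + B·C⁻¹·Bᵀ (with C⁻¹ = (det C)⁻¹ • adjugate C, a matrix over R) is skew-symmetric and each entry Λ i j is quasi-homogeneous of quasi-degree n_i + n_j + 2 relative to w. -/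
/-!
Give the entries of a matrix over `R[q]` the weighted degrees `a i + b j`. This shape is
preserved by sums, transposes and products (when the inner degrees cancel), and by adjugates
through the Leibniz formula. Over a reduced ring the units of `R[q]` are constants, so `(det C)⁻¹`
has degree `0` and `C⁻¹` has the degrees of `adj C`. With `a = b = ν + 1` for `C`, the
condition `∑ (ν p + 1) = 0` gives `C⁻¹` the degrees `-(ν l + 1) - (ν p + 1)`, so that
`B C⁻¹ Bᵀ` has the degrees `(n i + 1) + (n j + 1)` of `A`.
-/

open MvPolynomial Matrix

def IsWeightedHomogeneousMatrix {R σ M ι κ : Type*} [CommSemiring R] [AddCommMonoid M]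
    (w : σ → M) (P : Matrix ι κ (MvPolynomial σ R)) (a : ι → M) (b : κ → M) : Prop :=
  ∀ i j, IsWeightedHomogeneous w (P i j) (a i + b j)

namespace IsWeightedHomogeneousMatrix

section CommSemiring

variable {R σ M ι κ : Type*} [CommSemiring R]

theorem transpose [AddCommMonoid M] {w : σ → M} {P : Matrix ι κ (MvPolynomial σ R)}
    {a : ι → M} {b : κ → M} (hP : IsWeightedHomogeneousMatrix w P a b) :
    IsWeightedHomogeneousMatrix w Pᵀ b a :=
  fun i j => add_comm (a j) (b i) ▸ hP j i

theorem add [AddCommMonoid M] {w : σ → M} {P Q : Matrix ι κ (MvPolynomial σ R)}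
    {a : ι → M} {b : κ → M} (hP : IsWeightedHomogeneousMatrix w P a b)
    (hQ : IsWeightedHomogeneousMatrix w Q a b) :
    IsWeightedHomogeneousMatrix w (P + Q) a b :=
  fun i j => (hP i j).add (hQ i j)

theorem mul {ρ : Type*} [AddCommGroup M] [Fintype κ] {w : σ → M}
    {P : Matrix ι κ (MvPolynomial σ R)} {Q : Matrix κ ρ (MvPolynomial σ R)}
    {a : ι → M} {b : κ → M} {c : ρ → M}
    (hP : IsWeightedHomogeneousMatrix w P a b) (hQ : IsWeightedHomogeneousMatrix w Q (-b) c) :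
    IsWeightedHomogeneousMatrix w (P * Q) a c := by
  intro i l
  refine IsWeightedHomogeneous.sum _ _ _ fun j _ => ?_
  convert (hP i j).mul (hQ j l) using 1
  simp only [Pi.neg_apply]
  abel

end CommSemiring

section CommRing

variable {R σ M n : Type*} [CommRing R] [Fintype n] [DecidableEq n]

theorem det [AddCommMonoid M] {w : σ → M} {P : Matrix n n (MvPolynomial σ R)} {a b : n → M}
    (hP : IsWeightedHomogeneousMatrix w P a b) :
    IsWeightedHomogeneous w P.det (∑ i, a i + ∑ j, b j) := by
  rw [det_apply']
  refine IsWeightedHomogeneous.sum _ _ _ fun τ _ => ?_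
  have hsign : IsWeightedHomogeneous w ((Equiv.Perm.sign τ : ℤ) : MvPolynomial σ R) 0 := by
    simpa using isWeightedHomogeneous_C (R := R) w ((Equiv.Perm.sign τ : ℤ) : R)
  have hprod := IsWeightedHomogeneous.prod Finset.univ (fun j => P (τ j) j) _
    fun j _ => hP (τ j) j
  rw [Finset.sum_add_distrib, Equiv.sum_comp τ a] at hprod
  simpa using hsign.mul hprod

variable [AddCommGroup M] {w : σ → M}

theorem adjugate {P : Matrix n n (MvPolynomial σ R)} {a b : n → M}
    (hP : IsWeightedHomogeneousMatrix w P a b) :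
    IsWeightedHomogeneousMatrix w P.adjugate (fun i => ∑ j, b j - b i)
      (fun j => ∑ i, a i - a j) := by
  intro i j
  have hrow : IsWeightedHomogeneousMatrix w (P.updateRow j (Pi.single i 1))
      (Function.update a j (-b i)) b := by
    intro l p
    rcases eq_or_ne l j with rfl | hl
    · rcases eq_or_ne p i with rfl | hp
      · simpa using isWeightedHomogeneous_one R w
      · simpa [Pi.single_eq_of_ne hp] using isWeightedHomogeneous_zero R w _
    · simpa [hl] using hP l p
  convert adjugate_apply P i j ▸ hrow.det using 1
  rw [Finset.sum_update_of_mem (Finset.mem_univ j),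
    Finset.sum_eq_sum_sdiff_singleton_add (Finset.mem_univ j) a]
  dsimp only
  abel

end CommRing

end IsWeightedHomogeneousMatrix

theorem MvPolynomial.isWeightedHomogeneous_ringInverse {R σ M : Type*} [CommRing R] [IsReduced R]
    [AddCommMonoid M] (w : σ → M) (φ : MvPolynomial σ R) :
    IsWeightedHomogeneous w (Ring.inverse φ) 0 := by
  by_cases h : IsUnit φ
  · obtain ⟨r, -, hr⟩ := isUnit_iff_eq_C_of_isReduced.1 h.ringInverse
    exact hr ▸ isWeightedHomogeneous_C w r
  · exact Ring.inverse_non_unit φ h ▸ isWeightedHomogeneous_zero R w 0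

theorem IsWeightedHomogeneousMatrix.nonsing_inv {R σ M n : Type*} [CommRing R] [IsReduced R]
    [AddCommGroup M] [Fintype n] [DecidableEq n] {w : σ → M} {P : Matrix n n (MvPolynomial σ R)}
    {a b : n → M} (hP : IsWeightedHomogeneousMatrix w P a b) :
    IsWeightedHomogeneousMatrix w P⁻¹ (fun i => ∑ j, b j - b i) (fun j => ∑ i, a i - a j) := by
  intro i j
  simpa [inv_def] using (isWeightedHomogeneous_ringInverse w P.det).mul (hP.adjugate i j)

namespace Matrix

theorem transpose_nonsing_inv_of_transpose_eq_neg {n α : Type*} [Fintype n] [DecidableEq n]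
    [CommRing α] {C : Matrix n n α} (hC : Cᵀ = -C) (h : IsUnit C.det) : C⁻¹ᵀ = -C⁻¹ := by
  rw [transpose_nonsing_inv, hC]
  exact inv_eq_right_inv (by rw [neg_mul_neg, mul_nonsing_inv C h])

theorem transpose_add_mul_mul_transpose_of_transpose_eq_neg {n m α : Type*} [Fintype m]
    [CommRing α] {A : Matrix n n α} {B : Matrix n m α} {C : Matrix m m α}
    (hA : Aᵀ = -A) (hC : Cᵀ = -C) :
    (A + B * C * Bᵀ)ᵀ = -(A + B * C * Bᵀ) := by
  rw [transpose_add, transpose_mul, transpose_mul, transpose_transpose, hA, hC,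
    Matrix.neg_mul, Matrix.mul_neg, neg_add, Matrix.mul_assoc]

end Matrix

theorem dirac_reduced_matrix_skew_and_weighted_homogeneous_general
    (k m : ℕ)
    (n : Fin k → ℕ) (ν : Fin m → ℤ) (hν : (∑ p, (ν p + 1)) = 0)
    (A : Matrix (Fin k) (Fin k) (MvPolynomial (Fin k) ℂ))
    (B : Matrix (Fin k) (Fin m) (MvPolynomial (Fin k) ℂ))
    (C : Matrix (Fin m) (Fin m) (MvPolynomial (Fin k) ℂ))
    (hAskew : Aᵀ = -A)
    (hA : ∀ i j, IsWeightedHomogeneous (fun j => (n j : ℤ) + 2) (A i j)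
      ((n i : ℤ) + (n j : ℤ) + 2))
    (hB : ∀ i p, IsWeightedHomogeneous (fun j => (n j : ℤ) + 2) (B i p)
      ((n i : ℤ) + ν p + 2))
    (hCskew : Cᵀ = -C)
    (hC : ∀ l p, IsWeightedHomogeneous (fun j => (n j : ℤ) + 2) (C l p)
      (ν l + ν p + 2))
    (hCdet : IsUnit C.det) :
    (A + B * C⁻¹ * Bᵀ)ᵀ = -(A + B * C⁻¹ * Bᵀ) ∧
    ∀ i j, IsWeightedHomogeneous (fun j => (n j : ℤ) + 2)
      ((A + B * C⁻¹ * Bᵀ) i j) ((n i : ℤ) + (n j : ℤ) + 2) := by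
  refine ⟨transpose_add_mul_mul_transpose_of_transpose_eq_neg hAskew
    (transpose_nonsing_inv_of_transpose_eq_neg hCskew hCdet), ?_⟩
  set w : Fin k → ℤ := fun j => (n j : ℤ) + 2
  set a : Fin k → ℤ := fun i => (n i : ℤ) + 1
  set b : Fin m → ℤ := fun p => ν p + 1
  have hA' : IsWeightedHomogeneousMatrix w A a a := fun i j => by convert hA i j using 1; ring
  have hB' : IsWeightedHomogeneousMatrix w B a b := fun i p => by convert hB i p using 1; ring
  have hC' : IsWeightedHomogeneousMatrix w C b b := fun l p => by convert hC l p using 1; ring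
  have hCinv : IsWeightedHomogeneousMatrix w C⁻¹ (-b) (-b) := by
    have h := hC'.nonsing_inv
    simp only [hν, zero_sub] at h
    exact h
  have hBt : IsWeightedHomogeneousMatrix w Bᵀ (-(-b)) a := by
    rw [neg_neg]
    exact hB'.transpose
  have hΛ := hA'.add ((hB'.mul hCinv).mul hBt)
  exact fun i j => by convert hΛ i j using 1; ring

/-- The Dirac-reduced matrix `Λ = A + B C⁻¹ Bᵀ` of the transverse Poisson structure
is skew-symmetric with polynomial entries that are quasi-homogeneous, of quasi-degree
`n i + n j + 2` in position `(i,j)`, relative to the weights `w j = n j + 2`. -/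
theorem dirac_reduced_matrix_skew_and_weighted_homogeneous
    (k m : ℕ) (hk : 1 ≤ k) (hm : 1 ≤ m)
    (n : Fin k → ℕ) (ν : Fin m → ℤ) (hν : (∑ p, (ν p + 1)) = 0)
    (A : Matrix (Fin k) (Fin k) (MvPolynomial (Fin k) ℂ))
    (B : Matrix (Fin k) (Fin m) (MvPolynomial (Fin k) ℂ))
    (C : Matrix (Fin m) (Fin m) (MvPolynomial (Fin k) ℂ))
    (hAskew : Aᵀ = -A)
    (hA : ∀ i j, IsWeightedHomogeneous (fun j => (n j : ℤ) + 2) (A i j)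
      ((n i : ℤ) + (n j : ℤ) + 2))
    (hB : ∀ i p, IsWeightedHomogeneous (fun j => (n j : ℤ) + 2) (B i p)
      ((n i : ℤ) + ν p + 2))
    (hCskew : Cᵀ = -C)
    (hC : ∀ l p, IsWeightedHomogeneous (fun j => (n j : ℤ) + 2) (C l p)
      (ν l + ν p + 2))
    (hCdet : IsUnit C.det) :
    (A + B * C⁻¹ * Bᵀ)ᵀ = -(A + B * C⁻¹ * Bᵀ) ∧
    ∀ i j, IsWeightedHomogeneous (fun j => (n j : ℤ) + 2)
      ((A + B * C⁻¹ * Bᵀ) i j) ((n i : ℤ) + (n j : ℤ) + 2) :=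
  dirac_reduced_matrix_skew_and_weighted_homogeneous_general k m n ν hν A B C hAskew hA hB hCskew hC
    hCdet
end
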